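/- Let G be a finite group, K a subgroup of G, and P a matrix-valued function on ℝ² satisfying P(R_g l) = (M^α_g)† P(l) M^β_g for all g ∈ G, where M^α and M^β are unitary representations of G that restrict to irreducible representations of K. Fix l with P(R_k l) = P(l) for all k ∈ K. If the restrictions of M^α and M^β to K are inequivalent irreducible representations of K, then P(l) = 0. -/

import Mathlib

open Matrix

/-!
Invariance of `P` under the little group, combined with the transformation law and unitarity
of `Mα`, makes `P l` an intertwiner from the restriction of `Mβ` to `K` to that of `Mα`.
Its kernel and image are invariant subspaces, so by irreducibility (Schur's lemma) `P l` is
either zero or invertible, and an invertible intertwiner would make the two restrictions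
equivalent.
-/

section Schur

variable {ι R m n : Type*} [CommRing R] [Fintype m] [Fintype n]

def IsIrreducibleOn (s : Set ι) (ρ : ι → Matrix n n R) : Prop :=
  ∀ p : Submodule R (n → R), (∀ i ∈ s, ∀ v ∈ p, ρ i *ᵥ v ∈ p) → p = ⊥ ∨ p = ⊤

variable [DecidableEq n] {s : Set ι}
  {ρ : ι → Matrix m m R} {σ : ι → Matrix n n R} {A : Matrix m n R}

theorem ker_toLin'_eq_bot_or_eq_zero (hσ : IsIrreducibleOn s σ)
    (hA : ∀ i ∈ s, ρ i * A = A * σ i) : LinearMap.ker (toLin' A) = ⊥ ∨ A = 0 := by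
  refine (hσ _ fun i hi v hv => ?_).imp id fun h => ?_
  · rw [LinearMap.mem_ker, toLin'_apply] at hv ⊢
    rw [mulVec_mulVec, ← hA i hi, ← mulVec_mulVec, hv, mulVec_zero]
  · exact toLin'.injective (by rw [LinearMap.ker_eq_top.mp h, map_zero])

theorem range_toLin'_eq_top_or_eq_zero (hρ : IsIrreducibleOn s ρ)
    (hA : ∀ i ∈ s, ρ i * A = A * σ i) : LinearMap.range (toLin' A) = ⊤ ∨ A = 0 := by
  refine (hρ _ fun i hi v hv => ?_).symm.imp id fun h => ?_
  · obtain ⟨u, rfl⟩ := hv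
    refine ⟨σ i *ᵥ u, ?_⟩
    rw [toLin'_apply, toLin'_apply, mulVec_mulVec, ← hA i hi, ← mulVec_mulVec]
  · exact toLin'.injective (by rw [LinearMap.range_eq_bot.mp h, map_zero])

theorem exists_inverse_of_bijective_toLin' [DecidableEq m] (h : Function.Bijective (toLin' A)) :
    ∃ T : Matrix n m R, A * T = 1 ∧ T * A = 1 := by
  set e := LinearEquiv.ofBijective (toLin' A) h
  refine ⟨LinearMap.toMatrix' e.symm.toLinearMap, ?_, ?_⟩
  · rw [← LinearMap.toMatrix'_toLin' A, ← LinearMap.toMatrix'_comp]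
    convert LinearMap.toMatrix'_id
    exact LinearMap.ext e.apply_symm_apply
  · rw [← LinearMap.toMatrix'_toLin' A, ← LinearMap.toMatrix'_comp]
    convert LinearMap.toMatrix'_id
    exact LinearMap.ext e.symm_apply_apply

theorem eq_zero_or_exists_inverse_of_intertwines [DecidableEq m] (hρ : IsIrreducibleOn s ρ)
    (hσ : IsIrreducibleOn s σ) (hA : ∀ i ∈ s, ρ i * A = A * σ i) :
    A = 0 ∨ ∃ T : Matrix n m R, A * T = 1 ∧ T * A = 1 := by
  rcases ker_toLin'_eq_bot_or_eq_zero hσ hA with hker | hzero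
  · rcases range_toLin'_eq_top_or_eq_zero hρ hA with hrange | hzero
    · exact .inr <| exists_inverse_of_bijective_toLin'
        ⟨LinearMap.ker_eq_bot.mp hker, LinearMap.range_eq_top.mp hrange⟩
    · exact .inl hzero
  · exact .inl hzero

end Schur

theorem Matrix.mul_eq_mul_of_eq_conjTranspose_mul_mul {α m n : Type*} [CommRing α] [StarRing α]
    [Fintype m] [Fintype n] [DecidableEq m] {U : Matrix m m α} {A : Matrix m n α}
    {V : Matrix n n α} (hU : Uᴴ * U = 1) (h : A = Uᴴ * A * V) : U * A = A * V := by
  calc U * A = U * (Uᴴ * A * V) := by rw [← h]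
    _ = (U * Uᴴ) * A * V := by simp only [Matrix.mul_assoc]
    _ = A * V := by rw [mul_eq_one_comm.mp hU, Matrix.one_mul]

theorem no_mixing_at_little_group_general {G : Type} [Group G] {dα dβ : ℕ}
    (K : Subgroup G)
    (R : G →* Matrix (Fin 2) (Fin 2) ℝ)
    (Mα : G →* Matrix (Fin dα) (Fin dα) ℂ) (Mβ : G →* Matrix (Fin dβ) (Fin dβ) ℂ)
    (hUα : ∀ g, (Mα g)ᴴ * Mα g = 1)
    (hIrrα : ∀ p : Submodule ℂ (Fin dα → ℂ),
      (∀ k ∈ K, ∀ v ∈ p, (Mα k).mulVec v ∈ p) → p = ⊥ ∨ p = ⊤)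
    (hIrrβ : ∀ p : Submodule ℂ (Fin dβ → ℂ),
      (∀ k ∈ K, ∀ v ∈ p, (Mβ k).mulVec v ∈ p) → p = ⊥ ∨ p = ⊤)
    (hNequiv : ¬ ∃ (S : Matrix (Fin dα) (Fin dβ) ℂ) (T : Matrix (Fin dβ) (Fin dα) ℂ),
      S * T = 1 ∧ T * S = 1 ∧ ∀ k ∈ K, Mα k * S = S * Mβ k)
    (P : (Fin 2 → ℝ) → Matrix (Fin dα) (Fin dβ) ℂ)
    (hlaw : ∀ g l', P ((R g).mulVec l') = (Mα g)ᴴ * P l' * Mβ g)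
    (l : Fin 2 → ℝ)
    (hfix : ∀ k ∈ K, P ((R k).mulVec l) = P l) :
    P l = 0 := by
  have hint : ∀ k ∈ K, Mα k * P l = P l * Mβ k := fun k hk =>
    mul_eq_mul_of_eq_conjTranspose_mul_mul (hUα k) (by rw [← hlaw, hfix k hk])
  rcases eq_zero_or_exists_inverse_of_intertwines (s := (K : Set G)) (ρ := Mα) (σ := Mβ)
    hIrrα hIrrβ hint with h | ⟨T, h₁, h₂⟩
  · exact h
  · exact absurd ⟨P l, T, h₁, h₂, hint⟩ hNequiv

/-- **Corollary 1 at fixed bosonic momentum (no mixing at a little group).**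
Let `K ≤ G`, let `P` satisfy the transformation law `P (R g l) = (Mα g)ᴴ * P l * Mβ g`
with `Mα`, `Mβ` unitary representations of `G` restricting to irreducible representations
of `K`.  If `l` satisfies `P (R k l) = P l` for all `k ∈ K` and the restrictions of `Mα`
and `Mβ` to `K` are inequivalent, then `P l = 0`. -/
theorem no_mixing_at_little_group {G : Type} [Group G] [Finite G] {dα dβ : ℕ}
    (K : Subgroup G)
    (R : G →* Matrix (Fin 2) (Fin 2) ℝ)
    (hOrth : ∀ g, (R g)ᵀ * R g = 1)
    (Mα : G →* Matrix (Fin dα) (Fin dα) ℂ) (Mβ : G →* Matrix (Fin dβ) (Fin dβ) ℂ)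
    (hUα : ∀ g, (Mα g)ᴴ * Mα g = 1) (hUβ : ∀ g, (Mβ g)ᴴ * Mβ g = 1)
    (hIrrα : ∀ p : Submodule ℂ (Fin dα → ℂ),
      (∀ k ∈ K, ∀ v ∈ p, (Mα k).mulVec v ∈ p) → p = ⊥ ∨ p = ⊤)
    (hIrrβ : ∀ p : Submodule ℂ (Fin dβ → ℂ),
      (∀ k ∈ K, ∀ v ∈ p, (Mβ k).mulVec v ∈ p) → p = ⊥ ∨ p = ⊤)
    (hNequiv : ¬ ∃ (S : Matrix (Fin dα) (Fin dβ) ℂ) (T : Matrix (Fin dβ) (Fin dα) ℂ),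
      S * T = 1 ∧ T * S = 1 ∧ ∀ k ∈ K, Mα k * S = S * Mβ k)
    (P : (Fin 2 → ℝ) → Matrix (Fin dα) (Fin dβ) ℂ)
    (hlaw : ∀ g l', P ((R g).mulVec l') = (Mα g)ᴴ * P l' * Mβ g)
    (l : Fin 2 → ℝ)
    (hfix : ∀ k ∈ K, P ((R k).mulVec l) = P l) :
    P l = 0 :=
  no_mixing_at_little_group_general K R Mα Mβ hUα hIrrα hIrrβ hNequiv P hlaw l hfix
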